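/- (Nonnegative cross term) Let uᵏ ∈ ℝⁿ × ℝᵐ, let ũᵏ be a prediction from uᵏ, let u^{k+1} = uᵏ − M(uᵏ − ũᵏ), and let ũ^{k+1} be a prediction from u^{k+1}. Then (ũᵏ − ũ^{k+1})ᵀ Q [ (uᵏ − ũᵏ) − (u^{k+1} − ũ^{k+1}) ] ≥ 0. -/

import Mathlib

/-!
The optimality conditions of the two subproblems of a prediction `ũ` from `u` add up to the
variational inequality `θ(v) − θ(ũ) + (v − ũ)ᵀF(ũ) ≥ (v − ũ)ᵀQ(u − ũ)` for every `v ∈ Ω`.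
Apply it to the prediction from `uᵏ` with `v = ũᵏ⁺¹` and to the prediction from `uᵏ⁺¹` with
`v = ũᵏ`, and add: the `θ` terms cancel, and so do the `F` terms since `F` is skew,
`(u − v)ᵀ(F(u) − F(v)) = 0`. What remains is the claim.
-/

open Matrix

noncomputable section

/-- A primal-dual pair `(x, y) ∈ ℝⁿ × ℝᵐ`. -/
abbrev PDVec (n m : ℕ) := (Fin n → ℝ) × (Fin m → ℝ)

/-- View a primal-dual pair as a single vector indexed by `Fin n ⊕ Fin m`. -/
def pdToVec {n m : ℕ} (u : PDVec n m) : Fin n ⊕ Fin m → ℝ := Sum.elim u.1 u.2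

/-- `θ(u) = f(x) + g(y)`. -/
def pdTheta {n m : ℕ} (f : (Fin n → ℝ) → ℝ) (g : (Fin m → ℝ) → ℝ) (u : PDVec n m) : ℝ :=
  f u.1 + g u.2

/-- `F(u) = (−Aᵀy, Ax)`. -/
def pdF {n m : ℕ} (A : Matrix (Fin m) (Fin n) ℝ) (u : PDVec n m) : PDVec n m :=
  (-(Aᵀ.mulVec u.2), A.mulVec u.1)

/-- `Q = [[r·Iₙ, Aᵀ], [α·A, s·Iₘ]]`. -/
def pdQ {n m : ℕ} (A : Matrix (Fin m) (Fin n) ℝ) (r s α : ℝ) :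
    Matrix (Fin n ⊕ Fin m) (Fin n ⊕ Fin m) ℝ :=
  Matrix.fromBlocks (r • 1) Aᵀ (α • A) (s • 1)

/-- `M = [[Iₙ, 0], [−((1−α)/s)·A, Iₘ]]`. -/
def pdM {n m : ℕ} (A : Matrix (Fin m) (Fin n) ℝ) (s α : ℝ) :
    Matrix (Fin n ⊕ Fin m) (Fin n ⊕ Fin m) ℝ :=
  Matrix.fromBlocks 1 0 (-(((1 - α) / s) • A)) 1

/-- `H = [[r·Iₙ + ((1−α)/s)·AᵀA, Aᵀ], [A, s·Iₘ]]`. -/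
def pdH {n m : ℕ} (A : Matrix (Fin m) (Fin n) ℝ) (r s α : ℝ) :
    Matrix (Fin n ⊕ Fin m) (Fin n ⊕ Fin m) ℝ :=
  Matrix.fromBlocks (r • 1 + ((1 - α) / s) • (Aᵀ * A)) Aᵀ A (s • 1)

/-- `G = [[r·Iₙ + (α(1−α)/s)·AᵀA, Aᵀ], [A, s·Iₘ]]`. -/
def pdG {n m : ℕ} (A : Matrix (Fin m) (Fin n) ℝ) (r s α : ℝ) :
    Matrix (Fin n ⊕ Fin m) (Fin n ⊕ Fin m) ℝ :=
  Matrix.fromBlocks (r • 1 + ((α * (1 - α)) / s) • (Aᵀ * A)) Aᵀ A (s • 1)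

/-- `‖v‖²_S = vᵀ S v`. -/
def pdNormSq {k : Type*} [Fintype k] (S : Matrix k k ℝ) (v : k → ℝ) : ℝ :=
  v ⬝ᵥ S.mulVec v

/-- `ut` is a prediction from `uk`: its first component minimizes
`x ↦ f(x) − (yᵏ)ᵀAx + (r/2)‖x − xᵏ‖²` over `X`, and its second component minimizes
`y ↦ g(y) + yᵀA(x̃ᵏ + α(x̃ᵏ − xᵏ)) + (s/2)‖y − yᵏ‖²` over `Y`. -/
def IsPrediction {n m : ℕ} (X : Set (Fin n → ℝ)) (Y : Set (Fin m → ℝ))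
    (f : (Fin n → ℝ) → ℝ) (g : (Fin m → ℝ) → ℝ)
    (A : Matrix (Fin m) (Fin n) ℝ) (r s α : ℝ) (uk ut : PDVec n m) : Prop :=
  ut.1 ∈ X ∧
  (∀ x ∈ X,
      f ut.1 - uk.2 ⬝ᵥ A.mulVec ut.1 + r / 2 * ((ut.1 - uk.1) ⬝ᵥ (ut.1 - uk.1)) ≤
        f x - uk.2 ⬝ᵥ A.mulVec x + r / 2 * ((x - uk.1) ⬝ᵥ (x - uk.1))) ∧
  ut.2 ∈ Y ∧
  (∀ y ∈ Y,
      g ut.2 + ut.2 ⬝ᵥ A.mulVec (ut.1 + α • (ut.1 - uk.1)) +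
          s / 2 * ((ut.2 - uk.2) ⬝ᵥ (ut.2 - uk.2)) ≤
        g y + y ⬝ᵥ A.mulVec (ut.1 + α • (ut.1 - uk.1)) +
          s / 2 * ((y - uk.2) ⬝ᵥ (y - uk.2)))

/-- The solution set `Ω*` of the variational inequality `VI(Ω, F, θ)`. -/
def VISol {n m : ℕ} (X : Set (Fin n → ℝ)) (Y : Set (Fin m → ℝ))
    (f : (Fin n → ℝ) → ℝ) (g : (Fin m → ℝ) → ℝ)
    (A : Matrix (Fin m) (Fin n) ℝ) : Set (PDVec n m) :=
  {u | u.1 ∈ X ∧ u.2 ∈ Y ∧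
    ∀ v : PDVec n m, v.1 ∈ X → v.2 ∈ Y →
      pdTheta f g v - pdTheta f g u + (pdToVec v - pdToVec u) ⬝ᵥ pdToVec (pdF A u) ≥ 0}

open Filter Topology

lemma nonneg_of_forall_mul_add_sq_mul_nonneg {L C : ℝ}
    (h : ∀ t : ℝ, 0 < t → t ≤ 1 → 0 ≤ t * L + t ^ 2 * C) : 0 ≤ L := by
  have hlim : Tendsto (fun t : ℝ => L + t * C) (𝓝[>] 0) (𝓝 L) := by
    have : Continuous (fun t : ℝ => L + t * C) := by fun_prop
    simpa using (this.tendsto 0).mono_left nhdsWithin_le_nhds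
  refine ge_of_tendsto hlim ?_
  filter_upwards [Ioc_mem_nhdsGT one_pos] with t ⟨ht0, ht1⟩
  refine nonneg_of_mul_nonneg_right ?_ ht0
  linear_combination h t ht0 ht1

/-- Compare `p` with the points `p + t • (x - p)` of the segment towards `x` and let `t → 0`. -/
theorem ConvexOn.mul_dotProduct_le_of_isMinOn_add_sq {ι : Type*} [Fintype ι]
    {X : Set (ι → ℝ)} {f : (ι → ℝ) → ℝ} (hf : ConvexOn ℝ X f) {r : ℝ} {x₀ p : ι → ℝ}
    (hp : p ∈ X) (hmin : IsMinOn (fun x => f x + r / 2 * ((x - x₀) ⬝ᵥ (x - x₀))) X p)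
    {x : ι → ℝ} (hx : x ∈ X) :
    r * ((x - p) ⬝ᵥ (x₀ - p)) ≤ f x - f p := by
  suffices 0 ≤ f x - f p - r * ((x - p) ⬝ᵥ (x₀ - p)) by linarith
  refine nonneg_of_forall_mul_add_sq_mul_nonneg (C := r / 2 * ((x - p) ⬝ᵥ (x - p)))
    fun t ht0 ht1 => ?_
  have hmem : p + t • (x - p) ∈ X := hf.1.add_smul_sub_mem hp hx ⟨ht0.le, ht1⟩
  have hconv : f (p + t • (x - p)) ≤ (1 - t) * f p + t * f x := by
    have := hf.2 hp hx (sub_nonneg.2 ht1) ht0.le (by ring)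
    rwa [show (1 - t) • p + t • x = p + t • (x - p) by module] at this
  have hsq : ∀ a b : ι → ℝ,
      (t • a - b) ⬝ᵥ (t • a - b) = b ⬝ᵥ b - 2 * t * (a ⬝ᵥ b) + t ^ 2 * (a ⬝ᵥ a) := by
    intro a b
    simp only [sub_dotProduct, dotProduct_sub, smul_dotProduct, dotProduct_smul, smul_eq_mul,
      dotProduct_comm b a]
    ring
  have hle := isMinOn_iff.1 hmin _ hmem
  rw [show p + t • (x - p) - x₀ = t • (x - p) - (x₀ - p) by module, hsq,
    ← neg_sub x₀ p, neg_dotProduct_neg] at hle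
  linarith

lemma pdToVec_sub {n m : ℕ} (u v : PDVec n m) : pdToVec u - pdToVec v = pdToVec (u - v) := by
  ext (i | j) <;> rfl

lemma pdToVec_dotProduct_pdToVec {n m : ℕ} (u v : PDVec n m) :
    pdToVec u ⬝ᵥ pdToVec v = u.1 ⬝ᵥ v.1 + u.2 ⬝ᵥ v.2 :=
  sumElim_dotProduct_sumElim _ _ _ _

lemma pdQ_mulVec_pdToVec {n m : ℕ} (A : Matrix (Fin m) (Fin n) ℝ) (r s α : ℝ) (u : PDVec n m) :
    pdQ A r s α *ᵥ pdToVec u = pdToVec (r • u.1 + Aᵀ *ᵥ u.2, α • A *ᵥ u.1 + s • u.2) := by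
  simp [pdQ, pdToVec, fromBlocks_mulVec, smul_mulVec]

lemma pdF_sub {n m : ℕ} (A : Matrix (Fin m) (Fin n) ℝ) (u v : PDVec n m) :
    pdF A u - pdF A v = pdF A (u - v) := by
  simp only [pdF, Prod.mk_sub_mk, Prod.fst_sub, Prod.snd_sub, mulVec_sub]
  congr 1
  abel

lemma pdToVec_dotProduct_pdF_self {n m : ℕ} (A : Matrix (Fin m) (Fin n) ℝ) (u : PDVec n m) :
    pdToVec u ⬝ᵥ pdToVec (pdF A u) = 0 := by
  rw [pdToVec_dotProduct_pdToVec, pdF, dotProduct_neg, dotProduct_transpose_mulVec]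
  exact neg_add_cancel _

lemma pdToVec_sub_dotProduct_pdF_sub_eq_zero {n m : ℕ} (A : Matrix (Fin m) (Fin n) ℝ)
    (u v : PDVec n m) :
    (pdToVec u - pdToVec v) ⬝ᵥ (pdToVec (pdF A u) - pdToVec (pdF A v)) = 0 := by
  rw [pdToVec_sub, pdToVec_sub, pdF_sub, pdToVec_dotProduct_pdF_self]

lemma ConvexOn.sub_dotProduct_mulVec {ι κ : Type*} [Fintype ι] [Fintype κ]
    {X : Set (ι → ℝ)} {f : (ι → ℝ) → ℝ} (hf : ConvexOn ℝ X f) (A : Matrix κ ι ℝ) (y : κ → ℝ) :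
    ConvexOn ℝ X (fun x => f x - y ⬝ᵥ A *ᵥ x) :=
  hf.sub (((dotProductBilin ℝ ℝ y).comp A.mulVecLin).concaveOn hf.1)

lemma ConvexOn.add_dotProduct {κ : Type*} [Fintype κ] {Y : Set (κ → ℝ)} {g : (κ → ℝ) → ℝ}
    (hg : ConvexOn ℝ Y g) (c : κ → ℝ) : ConvexOn ℝ Y (fun y => g y + y ⬝ᵥ c) :=
  hg.add (((dotProductBilin ℝ ℝ).flip c).convexOn hg.1)

theorem IsPrediction.dotProduct_pdQ_le {n m : ℕ} {X : Set (Fin n → ℝ)} {Y : Set (Fin m → ℝ)}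
    {f : (Fin n → ℝ) → ℝ} {g : (Fin m → ℝ) → ℝ} (hf : ConvexOn ℝ X f) (hg : ConvexOn ℝ Y g)
    {A : Matrix (Fin m) (Fin n) ℝ} {r s α : ℝ} {u ũ : PDVec n m}
    (hpred : IsPrediction X Y f g A r s α u ũ) {v : PDVec n m} (hvX : v.1 ∈ X) (hvY : v.2 ∈ Y) :
    (pdToVec v - pdToVec ũ) ⬝ᵥ pdQ A r s α *ᵥ (pdToVec u - pdToVec ũ) ≤
      pdTheta f g v - pdTheta f g ũ + (pdToVec v - pdToVec ũ) ⬝ᵥ pdToVec (pdF A ũ) := by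
  obtain ⟨hX, hminX, hY, hminY⟩ := hpred
  have hx := (hf.sub_dotProduct_mulVec A u.2).mul_dotProduct_le_of_isMinOn_add_sq hX
    (isMinOn_iff.2 hminX) hvX
  have hy := ConvexOn.mul_dotProduct_le_of_isMinOn_add_sq
    (hg.add_dotProduct (A *ᵥ (ũ.1 + α • (ũ.1 - u.1)))) hY (isMinOn_iff.2 hminY) hvY
  rw [pdToVec_sub, pdToVec_sub, pdQ_mulVec_pdToVec, pdToVec_dotProduct_pdToVec,
    pdToVec_dotProduct_pdToVec]
  simp only [pdTheta, pdF, Prod.fst_sub, Prod.snd_sub, dotProduct_add, dotProduct_smul,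
    dotProduct_neg, dotProduct_transpose_mulVec, smul_eq_mul, mulVec_add, mulVec_smul,
    mulVec_sub, dotProduct_sub, sub_dotProduct] at hx hy ⊢
  linarith

theorem stmt_12_general (n m : ℕ)
    (X : Set (Fin n → ℝ)) (Y : Set (Fin m → ℝ))
    (hXcv : Convex ℝ X)
    (hYcv : Convex ℝ Y)
    (f : (Fin n → ℝ) → ℝ) (g : (Fin m → ℝ) → ℝ)
    (hf : ConvexOn ℝ Set.univ f) (hg : ConvexOn ℝ Set.univ g)
    (A : Matrix (Fin m) (Fin n) ℝ) (r s α : ℝ)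
    (uk utk uk1 utk1 : PDVec n m)
    (hpredk : IsPrediction X Y f g A r s α uk utk)
    (hpredk1 : IsPrediction X Y f g A r s α uk1 utk1) :
    (pdToVec utk - pdToVec utk1) ⬝ᵥ (pdQ A r s α).mulVec
        ((pdToVec uk - pdToVec utk) - (pdToVec uk1 - pdToVec utk1)) ≥ 0 := by
  have hfX := hf.subset (Set.subset_univ X) hXcv
  have hgY := hg.subset (Set.subset_univ Y) hYcv
  have hk := hpredk.dotProduct_pdQ_le hfX hgY hpredk1.1 hpredk1.2.2.1
  have hk1 := hpredk1.dotProduct_pdQ_le hfX hgY hpredk.1 hpredk.2.2.1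
  have hmono := pdToVec_sub_dotProduct_pdF_sub_eq_zero A utk utk1
  rw [← neg_sub (pdToVec utk), neg_dotProduct, neg_dotProduct] at hk
  rw [dotProduct_sub] at hmono
  rw [mulVec_sub, dotProduct_sub]
  linarith

/-- Nonnegativity of the cross term (5.9). -/
theorem stmt_12 (n m : ℕ) (hn : 0 < n) (hm : 0 < m)
    (X : Set (Fin n → ℝ)) (Y : Set (Fin m → ℝ))
    (hXne : X.Nonempty) (hXcl : IsClosed X) (hXcv : Convex ℝ X)
    (hYne : Y.Nonempty) (hYcl : IsClosed Y) (hYcv : Convex ℝ Y)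
    (f : (Fin n → ℝ) → ℝ) (g : (Fin m → ℝ) → ℝ)
    (hf : ConvexOn ℝ Set.univ f) (hg : ConvexOn ℝ Set.univ g)
    (A : Matrix (Fin m) (Fin n) ℝ) (r s α : ℝ) (hr : 0 < r) (hs : 0 < s)
    (uk utk uk1 utk1 : PDVec n m)
    (hpredk : IsPrediction X Y f g A r s α uk utk)
    (hcorr : pdToVec uk1 = pdToVec uk - (pdM A s α).mulVec (pdToVec uk - pdToVec utk))
    (hpredk1 : IsPrediction X Y f g A r s α uk1 utk1) :
    (pdToVec utk - pdToVec utk1) ⬝ᵥ (pdQ A r s α).mulVec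
        ((pdToVec uk - pdToVec utk) - (pdToVec uk1 - pdToVec utk1)) ≥ 0 :=
  stmt_12_general n m X Y hXcv hYcv f g hf hg A r s α uk utk uk1 utk1 hpredk hpredk1
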